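/- Every metric space is standard as a quasi-metric space, every Yoneda-complete quasi-metric space is standard, and every poset with the quasi-metric d_≤ is standard. -/

import Mathlib

open scoped ENNReal NNReal Classical

/-- A formal ball: a point together with a non-negative real radius. -/
structure FormalBall (X : Type*) where
  center : X
  radius : ℝ≥0

/-- A quasi-metric on `X`: a `[0,∞]`-valued distance with `d x x = 0`, the triangle
inequality, and `d x y = d y x = 0 → x = y`. -/
structure QuasiMetric (X : Type*) where
  d : X → X → ℝ≥0∞
  refl : ∀ x, d x x = 0
  triangle : ∀ x y z, d x z ≤ d x y + d y z
  separated : ∀ x y, d x y = 0 → d y x = 0 → x = y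

/-- The order on formal balls: `(x,r) ≤ (y,s)` iff `d x y ≤ r - s`
(equivalently `s ≤ r` and `d x y ≤ r - s`). -/
def ballLE {X : Type*} (q : QuasiMetric X) (b c : FormalBall X) : Prop :=
  c.radius ≤ b.radius ∧ q.d b.center c.center ≤ ↑(b.radius - c.radius)

/-- The partial order of formal balls `B(X,d)`. -/
def ballOrder {X : Type*} (q : QuasiMetric X) : PartialOrder (FormalBall X) where
  le := ballLE q
  le_refl b := ⟨le_rfl, by simp [ballLE, q.refl]⟩
  le_trans a b c hab hbc := ⟨hbc.1.trans hab.1, by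
    calc q.d a.center c.center ≤ q.d a.center b.center + q.d b.center c.center :=
          q.triangle _ _ _
      _ ≤ ↑(a.radius - b.radius) + ↑(b.radius - c.radius) := add_le_add hab.2 hbc.2
      _ = ↑(a.radius - c.radius) := by
          rw [← ENNReal.coe_add, tsub_add_tsub_cancel hab.1 hbc.1]⟩
  le_antisymm a b hab hba := by
    have hr : b.radius = a.radius := le_antisymm hab.1 hba.1
    have h1 : q.d a.center b.center = 0 := le_antisymm (by simpa [hr] using hab.2) bot_le
    have h2 : q.d b.center a.center = 0 := le_antisymm (by simpa [hr] using hba.2) bot_le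
    have hc := q.separated _ _ h1 h2
    cases a; cases b; simp_all

/-- A dcpo: every nonempty directed subset has a least upper bound. -/
def IsDcpo (α : Type*) [Preorder α] : Prop :=
  ∀ S : Set α, S.Nonempty → DirectedOn (· ≤ ·) S → ∃ a, IsLUB S a

/-- Yoneda-completeness: the poset of formal balls is a dcpo. -/
def YonedaComplete {X : Type*} (q : QuasiMetric X) : Prop :=
  letI := ballOrder q
  IsDcpo (FormalBall X)

/-- Standardness: a directed family of formal balls has a supremum iff the family with all
radii uniformly shifted by `s` has one. -/
def Standard {X : Type*} (q : QuasiMetric X) : Prop :=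
  letI := ballOrder q
  ∀ S : Set (FormalBall X), S.Nonempty → DirectedOn (· ≤ ·) S → ∀ s : ℝ≥0,
    ((∃ b, IsLUB S b) ↔
      ∃ b, IsLUB ((fun c : FormalBall X => FormalBall.mk c.center (c.radius + s)) '' S) b)

/-- The quasi-metric `d_≤` on a poset: `0` if `x ≤ y`, `∞` otherwise. -/
noncomputable def dle (X : Type*) [PartialOrder X] : QuasiMetric X where
  d x y := if x ≤ y then 0 else ⊤
  refl x := by simp
  triangle x y z := by
    by_cases hxy : x ≤ y
    · by_cases hyz : y ≤ z
      · simp [hxy, hyz, hxy.trans hyz]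
      · simp [hxy, hyz]
    · simp [hxy]
  separated x y h1 h2 := by
    by_cases hxy : x ≤ y
    · by_cases hyx : y ≤ x
      · exact le_antisymm hxy hyx
      · simp [hyx] at h2
    · simp [hxy] at h1

/-- The quasi-metric induced by a metric space via `edist`. -/
def metricQM (X : Type*) [MetricSpace X] : QuasiMetric X where
  d := edist
  refl := edist_self
  triangle := edist_triangle
  separated x y h1 _ := edist_eq_zero.mp h1

/-!
Shifting all radii by `s` is an order embedding of formal balls, so if the shifted family has a
supremum whose radius is `inf rᵢ + s`, unshifting it gives a supremum of the original family.
For metric spaces and posets the supremum of a directed family always has radius `inf rᵢ`, and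
the rest of its description (being an upper bound, resp. having the supremum of the centres as
centre) is invariant under the shift. In the metric case the radius is forced down to `inf rᵢ`
because, by symmetry of the distance, every `(xⱼ, 2 inf r - rⱼ)` with `rⱼ ≤ 2 inf r` is again
an upper bound.
For Yoneda-complete spaces both sides of the equivalence always hold.
-/

namespace FormalBall

variable {X : Type*}

def shift (s : ℝ≥0) (b : FormalBall X) : FormalBall X := ⟨b.center, b.radius + s⟩

theorem center_image_shift (S : Set (FormalBall X)) (s : ℝ≥0) :
    center '' (shift s '' S) = center '' S := by
  rw [Set.image_image]; rfl

theorem sInf_radius_image_shift {S : Set (FormalBall X)} (hS : S.Nonempty) (s : ℝ≥0) :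
    sInf (radius '' (shift s '' S)) = sInf (radius '' S) + s := by
  have himage : radius '' (shift s '' S) = (· + s) '' (radius '' S) := by
    simp only [Set.image_image]; rfl
  rw [himage, (monotone_id.add_const s).map_csInf_of_continuousAt
    (continuous_add_const s).continuousAt (hS.image _)]

theorem ballLE_iff_add_le (q : QuasiMetric X) {b c : FormalBall X} :
    ballLE q b c ↔ q.d b.center c.center + c.radius ≤ b.radius := by
  constructor
  · rintro ⟨hr, hd⟩
    calc q.d b.center c.center + c.radius ≤ ↑(b.radius - c.radius) + c.radius := by gcongr
      _ = b.radius := by rw [← ENNReal.coe_add, tsub_add_cancel_of_le hr]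
  · intro h
    refine ⟨by exact_mod_cast le_add_self.trans h, ?_⟩
    rw [ENNReal.coe_sub]
    exact ENNReal.le_sub_of_add_le_right ENNReal.coe_ne_top h

theorem ballLE_shift_iff (q : QuasiMetric X) (s : ℝ≥0) {b c : FormalBall X} :
    ballLE q (b.shift s) (c.shift s) ↔ ballLE q b c := by
  simp only [ballLE_iff_add_le, shift, ENNReal.coe_add, ← add_assoc]
  exact ENNReal.add_le_add_iff_right ENNReal.coe_ne_top

section Order

variable (q : QuasiMetric X)

theorem directedOn_image_shift {S : Set (FormalBall X)} (s : ℝ≥0)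
    (hS : letI := ballOrder q; DirectedOn (· ≤ ·) S) :
    letI := ballOrder q; DirectedOn (· ≤ ·) (shift s '' S) := by
  rintro _ ⟨a, ha, rfl⟩ _ ⟨b, hb, rfl⟩
  obtain ⟨c, hc, hac, hbc⟩ := hS a ha b hb
  exact ⟨_, ⟨c, hc, rfl⟩, (ballLE_shift_iff q s).2 hac, (ballLE_shift_iff q s).2 hbc⟩

theorem shift_mem_upperBounds_image_shift_iff {S : Set (FormalBall X)} {s : ℝ≥0}
    {x : FormalBall X} :
    (letI := ballOrder q; x.shift s ∈ upperBounds (shift s '' S)) ↔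
      (letI := ballOrder q; x ∈ upperBounds S) := by
  simp only [upperBounds, Set.forall_mem_image, Set.mem_ofPred_eq]
  exact forall₂_congr fun _ _ => ballLE_shift_iff q s

theorem isLUB_of_isLUB_image_shift {S : Set (FormalBall X)} {s : ℝ≥0} {x : FormalBall X}
    (h : letI := ballOrder q; IsLUB (shift s '' S) (x.shift s)) :
    letI := ballOrder q; IsLUB S x :=
  ⟨(shift_mem_upperBounds_image_shift_iff q).1 h.1,
    fun _ hb => (ballLE_shift_iff q s).1 (h.2 ((shift_mem_upperBounds_image_shift_iff q).2 hb))⟩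

end Order

end FormalBall

open FormalBall

namespace QuasiMetric

variable {X : Type*} (q : QuasiMetric X)

theorem standard_of_isLUB
    (radius_eq : ∀ (S : Set (FormalBall X)) (x : FormalBall X), S.Nonempty →
      (letI := ballOrder q; DirectedOn (· ≤ ·) S) →
      (letI := ballOrder q; IsLUB S x) → x.radius = sInf (radius '' S))
    (isLUB_shift : ∀ (S : Set (FormalBall X)) (x : FormalBall X) (s : ℝ≥0), S.Nonempty →
      (letI := ballOrder q; DirectedOn (· ≤ ·) S) →
      (letI := ballOrder q; IsLUB S x) → letI := ballOrder q; IsLUB (shift s '' S) (x.shift s)) :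
    Standard q := by
  intro S hne hdir s
  constructor
  · rintro ⟨x, hx⟩
    exact ⟨_, isLUB_shift S x s hne hdir hx⟩
  · rintro ⟨y, hy⟩
    have hr : y.radius = sInf (radius '' S) + s := by
      rw [← sInf_radius_image_shift hne]
      exact radius_eq _ y (hne.image _) (directedOn_image_shift q s hdir) hy
    have hy_eq : shift s ⟨y.center, sInf (radius '' S)⟩ = y := by rw [shift, ← hr]
    exact ⟨_, isLUB_of_isLUB_image_shift q (hy_eq ▸ hy)⟩

theorem standard_of_yonedaComplete (h : YonedaComplete q) : Standard q :=
  fun S hne hdir s =>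
    iff_of_true (h S hne hdir) (h _ (hne.image _) (directedOn_image_shift q s hdir))

end QuasiMetric

section Metric

variable {X : Type*} [MetricSpace X]

theorem ballLE_metricQM_iff {b c : FormalBall X} :
    ballLE (metricQM X) b c ↔ dist b.center c.center + c.radius ≤ b.radius := by
  rw [ballLE_iff_add_le]
  change edist _ _ + _ ≤ _ ↔ _
  rw [edist_nndist, ← ENNReal.coe_add, ENNReal.coe_le_coe, ← NNReal.coe_le_coe, NNReal.coe_add,
    coe_nndist]

theorem FormalBall.mk_two_mul_sInf_sub_mem_upperBounds {S : Set (FormalBall X)}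
    (hS : letI := ballOrder (metricQM X); DirectedOn (· ≤ ·) S) {b : FormalBall X} (hb : b ∈ S)
    (hb_le : b.radius ≤ 2 * sInf (radius '' S)) :
    letI := ballOrder (metricQM X);
    ⟨b.center, 2 * sInf (radius '' S) - b.radius⟩ ∈ upperBounds S := by
  intro c hc
  obtain ⟨d, hd, hcd, hbd⟩ := hS c hc b hb
  have hinf : sInf (radius '' S) ≤ d.radius := csInf_le (OrderBot.bddBelow _) ⟨d, hd, rfl⟩
  replace hcd := ballLE_metricQM_iff.1 hcd
  replace hbd := ballLE_metricQM_iff.1 hbd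
  refine ballLE_metricQM_iff.2 ?_
  rw [NNReal.coe_sub hb_le]
  push_cast at hinf ⊢
  linarith [dist_triangle c.center d.center b.center, dist_comm d.center b.center]

theorem FormalBall.radius_eq_sInf_of_isLUB {S : Set (FormalBall X)} (hne : S.Nonempty)
    (hS : letI := ballOrder (metricQM X); DirectedOn (· ≤ ·) S) {x : FormalBall X}
    (hx : letI := ballOrder (metricQM X); IsLUB S x) :
    x.radius = sInf (radius '' S) := by
  set r := sInf (radius '' S)
  have hle : x.radius ≤ r := le_csInf (hne.image _) (by rintro _ ⟨c, hc, rfl⟩; exact (hx.1 hc).1)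
  refine hle.antisymm (not_lt.1 fun hlt => ?_)
  obtain ⟨_, ⟨b, hb, rfl⟩, hb_lt⟩ :=
    exists_lt_of_csInf_lt (hne.image _) (show r < 2 * r - x.radius by
      rw [lt_tsub_iff_right, two_mul]; gcongr)
  have hxb := (hx.2 (mk_two_mul_sInf_sub_mem_upperBounds hS hb (hb_lt.le.trans tsub_le_self))).1
  exact (lt_tsub_comm.1 hb_lt).not_ge hxb

theorem FormalBall.isLUB_of_radius_eq_sInf {S : Set (FormalBall X)} (hne : S.Nonempty)
    {x : FormalBall X} (hx : letI := ballOrder (metricQM X); x ∈ upperBounds S)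
    (hr : x.radius = sInf (radius '' S)) :
    letI := ballOrder (metricQM X); IsLUB S x := by
  refine ⟨hx, fun b hb => ballLE_metricQM_iff.2 (le_of_forall_pos_lt_add fun ε hε => ?_)⟩
  obtain ⟨_, ⟨_, ⟨c, hc, rfl⟩, rfl⟩, hc_lt⟩ :=
    Real.lt_sInf_add_pos ((hne.image radius).image NNReal.toReal) (half_pos hε)
  rw [← NNReal.coe_sInf, ← hr] at hc_lt
  have hcx := ballLE_metricQM_iff.1 (hx hc)
  have hcb := ballLE_metricQM_iff.1 (hb hc)
  linarith [dist_triangle x.center c.center b.center, dist_comm x.center c.center]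

theorem FormalBall.isLUB_metricQM_iff {S : Set (FormalBall X)} (hne : S.Nonempty)
    (hS : letI := ballOrder (metricQM X); DirectedOn (· ≤ ·) S) {x : FormalBall X} :
    (letI := ballOrder (metricQM X); IsLUB S x) ↔
      (letI := ballOrder (metricQM X); x ∈ upperBounds S) ∧ x.radius = sInf (radius '' S) :=
  ⟨fun hx => ⟨hx.1, radius_eq_sInf_of_isLUB hne hS hx⟩,
    fun hx => isLUB_of_radius_eq_sInf hne hx.1 hx.2⟩

theorem standard_metricQM (X : Type*) [MetricSpace X] : Standard (metricQM X) := by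
  refine QuasiMetric.standard_of_isLUB _ (fun _ _ hne hS hx => radius_eq_sInf_of_isLUB hne hS hx)
    fun _ _ s hne hS hx => ?_
  rw [isLUB_metricQM_iff (hne.image _) (directedOn_image_shift _ s hS),
    sInf_radius_image_shift hne, shift_mem_upperBounds_image_shift_iff]
  exact ⟨hx.1, congrArg (· + s) (radius_eq_sInf_of_isLUB hne hS hx)⟩

end Metric

section Poset

variable {X : Type*} [PartialOrder X]

theorem ballLE_dle_iff {b c : FormalBall X} :
    ballLE (dle X) b c ↔ c.radius ≤ b.radius ∧ b.center ≤ c.center := by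
  by_cases h : b.center ≤ c.center <;> simp [ballLE, dle, h]

theorem FormalBall.isLUB_dle_iff {S : Set (FormalBall X)} (hne : S.Nonempty) {x : FormalBall X} :
    (letI := ballOrder (dle X); IsLUB S x) ↔
      IsLUB (center '' S) x.center ∧ x.radius = sInf (radius '' S) := by
  let _ := ballOrder (dle X)
  have hinf : ∀ c ∈ S, sInf (radius '' S) ≤ c.radius :=
    fun c hc => csInf_le (OrderBot.bddBelow _) ⟨c, hc, rfl⟩
  constructor
  · intro hx
    have hcenter : x.center ∈ upperBounds (center '' S) := by
      rintro _ ⟨c, hc, rfl⟩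
      exact (ballLE_dle_iff.1 (hx.1 hc)).2
    refine ⟨⟨hcenter, fun z hz => ?_⟩, le_antisymm ?_ ?_⟩
    · have hzub : (⟨z, 0⟩ : FormalBall X) ∈ upperBounds S :=
        fun c hc => ballLE_dle_iff.2 ⟨zero_le, hz ⟨c, hc, rfl⟩⟩
      exact (ballLE_dle_iff.1 (hx.2 hzub)).2
    · exact le_csInf (hne.image _) (by rintro _ ⟨c, hc, rfl⟩; exact (hx.1 hc).1)
    · have hinfub : (⟨x.center, sInf (radius '' S)⟩ : FormalBall X) ∈ upperBounds S :=
        fun c hc => ballLE_dle_iff.2 ⟨hinf c hc, hcenter ⟨c, hc, rfl⟩⟩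
      exact (ballLE_dle_iff.1 (hx.2 hinfub)).1
  · rintro ⟨hcenter, hr⟩
    refine ⟨fun c hc => ballLE_dle_iff.2 ⟨hr ▸ hinf c hc, hcenter.1 ⟨c, hc, rfl⟩⟩,
      fun b hb => ballLE_dle_iff.2 ⟨?_, hcenter.2 ?_⟩⟩
    · exact hr ▸ le_csInf (hne.image _) (by rintro _ ⟨c, hc, rfl⟩; exact (hb hc).1)
    · rintro _ ⟨c, hc, rfl⟩
      exact (ballLE_dle_iff.1 (hb hc)).2

theorem standard_dle (X : Type*) [PartialOrder X] : Standard (dle X) := by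
  refine QuasiMetric.standard_of_isLUB _ (fun _ _ hne _ hx => ((isLUB_dle_iff hne).1 hx).2)
    fun _ _ s hne _ hx => ?_
  rw [isLUB_dle_iff (hne.image _), center_image_shift, sInf_radius_image_shift hne]
  obtain ⟨hcenter, hr⟩ := (isLUB_dle_iff hne).1 hx
  exact ⟨hcenter, congrArg (· + s) hr⟩

end Poset

/-- every metric space is standard, every Yoneda-complete quasi-metric
space is standard, and every poset (with `d_≤`) is standard. -/
theorem standard_of_metric_yoneda_poset :
    (∀ (X : Type*) [MetricSpace X], Standard (metricQM X)) ∧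
    (∀ (X : Type*) (q : QuasiMetric X), YonedaComplete q → Standard q) ∧
    (∀ (X : Type*) [PartialOrder X], Standard (dle X)) :=
  ⟨standard_metricQM, fun _ => QuasiMetric.standard_of_yonedaComplete, standard_dle⟩
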